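/- Any Lie algebra homomorphism ξ of e₀(2) (basis X₁,X₂,X₃, brackets [X₃,X₁]=X₂, [X₃,X₂]=−X₁) whose matrix has (3,3)-entry γ with γ²∉{0,1} and which does not annihilate span(X₁,X₂) fails to exist; precisely, every homomorphism ξ of e₀(2) has one of these forms in the basis (X₁,X₂,X₃): rows ((0,0,a),(0,0,b),(0,0,γ)); rows ((α,−β,a),(β,α,b),(0,0,1)); or rows ((α,β,a),(β,−α,b),(0,0,−1)). -/

import Mathlib

/-!
Write `γ = M 2 2`. A homomorphism maps the derived algebra `span(X₁, X₂)` into itself, and on it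
`ad (M X₃)` acts as `γ` times the rotation `J` by a right angle, since `ad X₃` acts as `J`. Hence
`M ∘ J = γ J ∘ M` on `span(X₁, X₂)`, and applying this twice with `J² = -1` gives `M = γ² M` there:
either `M` kills `span(X₁, X₂)`, or `γ = ±1` and `M` commutes or anticommutes with `J` on it.
-/

/-- The bracket of `e₀(2)`: `[X₃,X₁] = X₂`, `[X₃,X₂] = −X₁`. -/
def brE (u v : Fin 3 → ℝ) : Fin 3 → ℝ :=
  ![u 1 * v 2 - u 2 * v 1, u 2 * v 0 - u 0 * v 2, 0]

lemma brE_single_two_single_zero : brE (Pi.single 2 1) (Pi.single 0 1) = Pi.single 1 1 := by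
  ext i; fin_cases i <;> simp [brE]

lemma brE_single_two_single_one : brE (Pi.single 2 1) (Pi.single 1 1) = -Pi.single 0 1 := by
  ext i; fin_cases i <;> simp [brE]

lemma brE_of_apply_two_eq_zero (u : Fin 3 → ℝ) {v : Fin 3 → ℝ} (hv : v 2 = 0) :
    brE u v = ![-(u 2 * v 1), u 2 * v 0, 0] := by
  ext i; fin_cases i <;> simp [brE, hv]

section Homomorphism

variable {M : Matrix (Fin 3) (Fin 3) ℝ}
  (hM : ∀ u v, M.mulVec (brE u v) = brE (M.mulVec u) (M.mulVec v))
include hM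

lemma col_one_eq_brE : M.col 1 = brE (M.col 2) (M.col 0) := by
  simpa [brE_single_two_single_zero] using hM (Pi.single 2 1) (Pi.single 0 1)

lemma neg_col_zero_eq_brE : -M.col 0 = brE (M.col 2) (M.col 1) := by
  simpa [brE_single_two_single_one, Matrix.mulVec_neg] using hM (Pi.single 2 1) (Pi.single 1 1)

lemma apply_two_zero_eq_zero : M 2 0 = 0 :=
  neg_eq_zero.mp (congrFun (neg_col_zero_eq_brE hM) 2)

lemma apply_two_one_eq_zero : M 2 1 = 0 :=
  congrFun (col_one_eq_brE hM) 2

lemma col_one_eq_rotate_col_zero : M 0 1 = -(M 2 2 * M 1 0) ∧ M 1 1 = M 2 2 * M 0 0 := by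
  have h := col_one_eq_brE hM
  rw [brE_of_apply_two_eq_zero _ (apply_two_zero_eq_zero hM)] at h
  exact ⟨by simpa using congrFun h 0, by simpa using congrFun h 1⟩

lemma col_zero_eq_rotate_col_one : M 0 0 = M 2 2 * M 1 1 ∧ -M 1 0 = M 2 2 * M 0 1 := by
  have h := neg_col_zero_eq_brE hM
  rw [brE_of_apply_two_eq_zero _ (apply_two_one_eq_zero hM)] at h
  exact ⟨by simpa using congrFun h 0, by simpa using congrFun h 1⟩

lemma apply_two_two_eq_one_or_neg_one (hcol : ¬(M 0 0 = 0 ∧ M 1 0 = 0)) :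
    M 2 2 = 1 ∨ M 2 2 = -1 := by
  obtain ⟨h01, h11⟩ := col_one_eq_rotate_col_zero hM
  obtain ⟨h00, h10⟩ := col_zero_eq_rotate_col_one hM
  have hz0 : (1 - M 2 2 ^ 2) * M 0 0 = 0 := by linear_combination h00 + M 2 2 * h11
  have hz1 : (1 - M 2 2 ^ 2) * M 1 0 = 0 := by linear_combination -h10 - M 2 2 * h01
  have hγ : 1 - M 2 2 ^ 2 = 0 := by
    rcases not_and_or.mp hcol with h | h
    · exact (mul_eq_zero.mp hz0).resolve_right h
    · exact (mul_eq_zero.mp hz1).resolve_right h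
  exact sq_eq_one_iff.mp (by linear_combination -hγ)

end Homomorphism

/-- Every Lie algebra endomorphism of `e₀(2)` has in the basis `(X₁,X₂,X₃)` one of the
forms: rows `((0,0,a),(0,0,b),(0,0,γ))`; rows `((α,−β,a),(β,α,b),(0,0,1))`;
or rows `((α,β,a),(β,−α,b),(0,0,−1))`. -/
theorem e02_homomorphism_form
    (M : Matrix (Fin 3) (Fin 3) ℝ)
    (hM : ∀ u v, M.mulVec (brE u v) = brE (M.mulVec u) (M.mulVec v)) :
    (∀ i, M i 0 = 0 ∧ M i 1 = 0) ∨
    (M 2 0 = 0 ∧ M 2 1 = 0 ∧ M 2 2 = 1 ∧ M 1 1 = M 0 0 ∧ M 1 0 = -M 0 1) ∨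
    (M 2 0 = 0 ∧ M 2 1 = 0 ∧ M 2 2 = -1 ∧ M 1 1 = -M 0 0 ∧ M 1 0 = M 0 1) := by
  have h20 := apply_two_zero_eq_zero hM
  have h21 := apply_two_one_eq_zero hM
  obtain ⟨h01, h11⟩ := col_one_eq_rotate_col_zero hM
  by_cases hcol : M 0 0 = 0 ∧ M 1 0 = 0
  · obtain ⟨h00, h10⟩ := hcol
    have h01' : M 0 1 = 0 := by rw [h01, h10, mul_zero, neg_zero]
    have h11' : M 1 1 = 0 := by rw [h11, h00, mul_zero]
    exact Or.inl fun i => by fin_cases i <;> exact ⟨‹_›, ‹_›⟩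
  rcases apply_two_two_eq_one_or_neg_one hM hcol with hγ | hγ
  · exact Or.inr <| Or.inl ⟨h20, h21, hγ, by rw [h11, hγ, one_mul], by rw [h01, hγ]; ring⟩
  · exact Or.inr <| Or.inr ⟨h20, h21, hγ, by rw [h11, hγ]; ring, by rw [h01, hγ]; ring⟩
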